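/- In the super setting, assume: (i) ker(F⁻∘F⁺) and ker(F⁺∘F⁻) are finite-dimensional; (ii) V⁰ = ker(F⁻∘F⁺) ⊕ im(F⁻∘F⁺) and V¹ = ker(F⁺∘F⁻) ⊕ im(F⁺∘F⁻). Then (F⁺, F⁻) is a Fredholm pair and ind(F⁺, F⁻) = dim ker(F⁻∘F⁺) − dim ker(F⁺∘F⁻). -/

import Mathlib

open LinearMap Module

/-- The quotient `ker S / (ker S ∩ im T)` appearing in the definition of a Fredholm pair. -/
abbrev fredholmKerQuot {X Y : Type*} [AddCommGroup X] [Module ℂ X]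
    [AddCommGroup Y] [Module ℂ Y] (S : X →ₗ[ℂ] Y) (T : Y →ₗ[ℂ] X) :=
  (LinearMap.ker S) ⧸ (Submodule.comap (LinearMap.ker S).subtype (LinearMap.range T))

/-- `(S, T)` is a Fredholm pair if `ker S / (ker S ∩ im T)` and `ker T / (ker T ∩ im S)`
are both finite dimensional. -/
def IsFredholmPair {X Y : Type*} [AddCommGroup X] [Module ℂ X]
    [AddCommGroup Y] [Module ℂ Y] (S : X →ₗ[ℂ] Y) (T : Y →ₗ[ℂ] X) : Prop :=
  FiniteDimensional ℂ (fredholmKerQuot S T) ∧ FiniteDimensional ℂ (fredholmKerQuot T S)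

/-- The index of a Fredholm pair:
`ind(S,T) = dim (ker S / (ker S ∩ im T)) - dim (ker T / (ker T ∩ im S))`. -/
noncomputable def fredholmIndex {X Y : Type*} [AddCommGroup X] [Module ℂ X]
    [AddCommGroup Y] [Module ℂ Y] (S : X →ₗ[ℂ] Y) (T : Y →ₗ[ℂ] X) : ℤ :=
  (Module.finrank ℂ (fredholmKerQuot S T) : ℤ) - (Module.finrank ℂ (fredholmKerQuot T S) : ℤ)

/-
With `X = ker TS ⊕ im TS` and `Y = ker ST ⊕ im ST`, the intersection `ker S ∩ im T` is exactly
`T (ker ST)`. Rank–nullity for `T` on `ker ST ⊇ ker T` then gives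
`dim (ker S / (ker S ∩ im T)) + dim ker ST = dim ker S + dim ker T`, an expression symmetric in
`S` and `T`; subtracting it from its mirror image leaves `dim ker TS - dim ker ST`.
-/

open Submodule

section

variable {R K X Y : Type*}

theorem ker_inf_range_eq_map_ker_comp [Ring R] [AddCommGroup X] [Module R X]
    [AddCommGroup Y] [Module R Y] (S : X →ₗ[R] Y) (T : Y →ₗ[R] X)
    (hdisj : Disjoint (ker (T ∘ₗ S)) (range (T ∘ₗ S)))
    (hsup : ker (S ∘ₗ T) ⊔ range (S ∘ₗ T) = ⊤) :
    ker S ⊓ range T = map T (ker (S ∘ₗ T)) := by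
  refine le_antisymm ?_ (le_inf ?_ (map_le_range (f := T)))
  · rintro _ ⟨hSTy, y, rfl⟩
    obtain ⟨k, hk, _, ⟨z, rfl⟩, rfl⟩ := mem_sup.mp (hsup ▸ mem_top : y ∈ _)
    -- `T (S T z)` lies both in `ker TS` and in `im TS`, hence vanishes.
    have hSTk : S (T k) = 0 := hk
    have hTSTz : T (S (T z)) = 0 := disjoint_def.mp hdisj _
      (by simpa [hSTk] using congrArg T (mem_ker.mp hSTy)) ⟨T z, rfl⟩
    exact ⟨k, hk, by simp [hTSTz]⟩
  · rintro _ ⟨y, hy, rfl⟩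
    exact hy

theorem finrank_map_ker_comp_add_finrank_ker [DivisionRing K] [AddCommGroup X] [Module K X]
    [AddCommGroup Y] [Module K Y] (S : X →ₗ[K] Y) (T : Y →ₗ[K] X)
    [FiniteDimensional K (ker (S ∘ₗ T))] :
    finrank K (map T (ker (S ∘ₗ T))) + finrank K (ker T) = finrank K (ker (S ∘ₗ T)) := by
  have hker : finrank K (ker (T.domRestrict (ker (S ∘ₗ T)))) = finrank K (ker T) := by
    rw [ker_domRestrict]
    exact (comapSubtypeEquivOfLe (ker_le_ker_comp T S)).finrank_eq
  rw [← hker, ← range_domRestrict, finrank_range_add_finrank_ker]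

theorem finrank_comap_subtype [DivisionRing K] [AddCommGroup X] [Module K X]
    (p q : Submodule K X) : finrank K (comap p.subtype q) = finrank K ↥(p ⊓ q) := by
  rw [(equivSubtypeMap p _).finrank_eq, map_comap_subtype]

end

section

variable {X Y : Type*} [AddCommGroup X] [Module ℂ X] [AddCommGroup Y] [Module ℂ Y]
  (S : X →ₗ[ℂ] Y) (T : Y →ₗ[ℂ] X)

theorem finrank_fredholmKerQuot_add_finrank_ker_inf_range [FiniteDimensional ℂ (ker S)] :
    finrank ℂ (fredholmKerQuot S T) + finrank ℂ ↥(ker S ⊓ range T) = finrank ℂ (ker S) := by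
  rw [← finrank_comap_subtype]
  exact finrank_quotient_add_finrank _

theorem finrank_fredholmKerQuot_add_finrank_ker_comp [FiniteDimensional ℂ (ker S)]
    [FiniteDimensional ℂ (ker (S ∘ₗ T))]
    (hdisj : Disjoint (ker (T ∘ₗ S)) (range (T ∘ₗ S)))
    (hsup : ker (S ∘ₗ T) ⊔ range (S ∘ₗ T) = ⊤) :
    finrank ℂ (fredholmKerQuot S T) + finrank ℂ (ker (S ∘ₗ T)) =
      finrank ℂ (ker S) + finrank ℂ (ker T) := by
  rw [← finrank_map_ker_comp_add_finrank_ker, ← add_assoc,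
    ← ker_inf_range_eq_map_ker_comp S T hdisj hsup,
    finrank_fredholmKerQuot_add_finrank_ker_inf_range]

end

theorem fredholmIndex_super_eq_dim_ker_sub_dim_ker_general {V₀ V₁ : Type*}
    [AddCommGroup V₀] [Module ℂ V₀] [AddCommGroup V₁] [Module ℂ V₁]
    (dp δp : V₀ →ₗ[ℂ] V₁) (dm δm : V₁ →ₗ[ℂ] V₀)
    (hker₀ : FiniteDimensional ℂ (LinearMap.ker ((dm + δm) ∘ₗ (dp + δp))))
    (hker₁ : FiniteDimensional ℂ (LinearMap.ker ((dp + δp) ∘ₗ (dm + δm))))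
    (hcompl₀ : IsCompl (LinearMap.ker ((dm + δm) ∘ₗ (dp + δp)))
      (LinearMap.range ((dm + δm) ∘ₗ (dp + δp))))
    (hcompl₁ : IsCompl (LinearMap.ker ((dp + δp) ∘ₗ (dm + δm)))
      (LinearMap.range ((dp + δp) ∘ₗ (dm + δm)))) :
    IsFredholmPair (dp + δp) (dm + δm) ∧
    fredholmIndex (dp + δp) (dm + δm) =
      (Module.finrank ℂ (LinearMap.ker ((dm + δm) ∘ₗ (dp + δp))) : ℤ) -
        (Module.finrank ℂ (LinearMap.ker ((dp + δp) ∘ₗ (dm + δm))) : ℤ) := by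
  set S := dp + δp
  set T := dm + δm
  have : FiniteDimensional ℂ (ker S) := finiteDimensional_of_le (ker_le_ker_comp S T)
  have : FiniteDimensional ℂ (ker T) := finiteDimensional_of_le (ker_le_ker_comp T S)
  refine ⟨⟨inferInstance, inferInstance⟩, ?_⟩
  have hS := finrank_fredholmKerQuot_add_finrank_ker_comp S T
    hcompl₀.disjoint hcompl₁.sup_eq_top
  have hT := finrank_fredholmKerQuot_add_finrank_ker_comp T S
    hcompl₁.disjoint hcompl₀.sup_eq_top
  unfold fredholmIndex
  omega

/-- in the super setting, if `ker(F⁻∘F⁺)` and `ker(F⁺∘F⁻)` are finite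
dimensional and `V⁰ = ker(F⁻∘F⁺) ⊕ im(F⁻∘F⁺)`, `V¹ = ker(F⁺∘F⁻) ⊕ im(F⁺∘F⁻)`, then
`(F⁺, F⁻)` is a Fredholm pair and `ind(F⁺,F⁻) = dim ker(F⁻∘F⁺) - dim ker(F⁺∘F⁻)`. -/
theorem fredholmIndex_super_eq_dim_ker_sub_dim_ker {V₀ V₁ : Type*}
    [AddCommGroup V₀] [Module ℂ V₀] [AddCommGroup V₁] [Module ℂ V₁]
    (dp δp : V₀ →ₗ[ℂ] V₁) (dm δm : V₁ →ₗ[ℂ] V₀)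
    (hd₁ : dm ∘ₗ dp = 0) (hd₂ : dp ∘ₗ dm = 0)
    (hδ₁ : δm ∘ₗ δp = 0) (hδ₂ : δp ∘ₗ δm = 0)
    (hker₀ : FiniteDimensional ℂ (LinearMap.ker ((dm + δm) ∘ₗ (dp + δp))))
    (hker₁ : FiniteDimensional ℂ (LinearMap.ker ((dp + δp) ∘ₗ (dm + δm))))
    (hcompl₀ : IsCompl (LinearMap.ker ((dm + δm) ∘ₗ (dp + δp)))
      (LinearMap.range ((dm + δm) ∘ₗ (dp + δp))))
    (hcompl₁ : IsCompl (LinearMap.ker ((dp + δp) ∘ₗ (dm + δm)))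
      (LinearMap.range ((dp + δp) ∘ₗ (dm + δm)))) :
    IsFredholmPair (dp + δp) (dm + δm) ∧
    fredholmIndex (dp + δp) (dm + δm) =
      (Module.finrank ℂ (LinearMap.ker ((dm + δm) ∘ₗ (dp + δp))) : ℤ) -
        (Module.finrank ℂ (LinearMap.ker ((dp + δp) ∘ₗ (dm + δm))) : ℤ) :=
  fredholmIndex_super_eq_dim_ker_sub_dim_ker_general dp δp dm δm hker₀ hker₁ hcompl₀ hcompl₁
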